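/- arXiv:2306.12342 — 2 statements merged into one kernel-verified Lean document; each statement's English description precedes it below -/
import Mathlib

section
/- Let m, k, N be positive integers and let E = {v_1,…,v_N} ⊂ R^m be a generic set of nonzero vectors. Suppose (1/p_j, λ_j)_{j=1}^N with 1/p_j ∈ (0,1) satisfies conditions (Scaling), (v1), (v2), (I), and that λ_j < 0 for at least one index j. Let j_0 be an index with λ_{j_0} = min{λ_j : j = 1,…,N}. Then there exist a nonempty finite index set ζ, real exponent vectors β^{(α)} = (β_1^{(α)},…,β_N^{(α)}) for α ∈ ζ, and a finite constant C such that: (i) for each α ∈ ζ the family (1/p_j, β_j^{(α)})_{j=1}^N satisfies (Scaling), (v1), (v2), (I); (ii) β_{j_0}^{(α)} = 0 for all α ∈ ζ; (iii) β_j^{(α)} = λ_j whenever λ_j < 0 and j ≠ j_0; (iv) 0 ≤ β_j^{(α)} ≤ λ_j whenever λ_j ≥ 0; and (v) for all nonnegative measurable f_1,…,f_N on R^k, Λ(f_1,…,f_N) ≤ C Σ_{α∈ζ} Λ(|·|^{λ_1−β_1^{(α)}} f_1, …, |·|^{λ_N−β_N^{(α)}} f_N), where |·|^{μ} f denotes the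 function y ↦ |y|^{μ} f(y) on R^k. -/
open MeasureTheory ENNReal
open scoped Classical

/-- The dot product `v · x ∈ ℝᵏ` for `v ∈ ℝᵐ` and `x ∈ (ℝᵏ)ᵐ`. -/
noncomputable def dotv {m k : ℕ} (v : Fin m → ℝ)
    (x : Fin m → EuclideanSpace ℝ (Fin k)) : EuclideanSpace ℝ (Fin k) :=
  ∑ i, v i • x i

/-- The Brascamp–Lieb form `Λ(f₁,…,f_N) = ∫ ∏ f_j(v_j · x) dx`. -/
noncomputable def BLform {m k N : ℕ} (v : Fin N → Fin m → ℝ)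
    (f : Fin N → EuclideanSpace ℝ (Fin k) → ℝ≥0∞) : ℝ≥0∞ :=
  ∫⁻ x : Fin m → EuclideanSpace ℝ (Fin k), ∏ j, f j (dotv (v j) x)

/-- The weighted norm `‖f‖_{L^p_α} = ‖ |·|^α f ‖_{L^p}`. -/
noncomputable def wnorm {k : ℕ} (p α : ℝ)
    (f : EuclideanSpace ℝ (Fin k) → ℝ≥0∞) : ℝ≥0∞ :=
  (∫⁻ y : EuclideanSpace ℝ (Fin k), ((‖y‖₊ : ℝ≥0∞) ^ α * f y) ^ p) ^ (1 / p)

/-- A family of vectors in `ℝᵐ` is generic if every subfamily of cardinality `m`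
is a basis of `ℝᵐ`. -/
def IsGeneric {m N : ℕ} (v : Fin N → Fin m → ℝ) : Prop :=
  ∀ s : Finset (Fin N), s.card = m →
    LinearIndependent ℝ (fun i : s => v i.1) ∧
      Submodule.span ℝ (v '' ↑s) = ⊤


/-!
Put `s = -λ_{j₀} > 0`. The exponents are indexed by the sets `B` of `m - 1` indices avoiding `j₀`:
`β^B` vanishes at `j₀` and takes the mass `s` away from the indices outside `B ∪ {j₀}` with
positive `λ_i`, in proportion to `λ_i`. Condition (v2) for `span (v '' B)`, whose complement is
exactly `Bᶜ` by genericity, says that these `λ_i` add up to at least `s`, so `0 ≤ β^B ≤ λ` there.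
(Scaling) holds because the total exponent is unchanged; (v1) because every summand
`1/p_j + β_j/k` is `< 1` (by (v1) for the line `ℝ v_j`, and `1/p_{j₀} < 1`), while a proper
subspace `V` contains at most `dim V` of the generic `v_j`; (v2) follows from (v2) for `λ`,
directly if `v_{j₀} ∉ V`, and otherwise applied to the span of the vectors in `V` with `v_{j₀}`
exchanged for a vector outside `V` that received mass.

For the form, fix `x` and let `B` collect the `m - 1` indices `j ≠ j₀` with smallest `|v_j · x|`.
Any `m` of the `v_j` span `ℝᵐ`, so `|v_{j₀} · x| ≲ |v_i · x|` for all `i ∉ B ∪ {j₀}`, hence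
`|v_{j₀} · x|^s ≲ ∏_i |v_i · x|^{λ_i - β^B_i}`, i.e. `1 ≲ ∏_j |v_j · x|^{λ_j - β^B_j}` pointwise
almost everywhere; multiplying by `∏_j f_j(v_j · x)` and integrating gives the bound.
-/

open Finset Module Submodule

theorem Finset.exists_subset_card_eq_forall_le {ι α : Type*} [DecidableEq ι] [LinearOrder α]
    (g : ι → α) {r : ℕ} {U : Finset ι} (hr : r ≤ #U) :
    ∃ B ⊆ U, #B = r ∧ ∀ b ∈ B, ∀ i ∈ U \ B, g b ≤ g i := by
  induction r with
  | zero => exact ⟨∅, empty_subset U, rfl, by simp⟩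
  | succ r ih =>
    obtain ⟨B, hBU, hBcard, hBmin⟩ := ih (Nat.le_of_succ_le hr)
    obtain ⟨b, hb, hbmin⟩ := exists_min_image (U \ B) g <| by
      rw [← card_pos, card_sdiff_of_subset hBU]; omega
    have hbB : b ∉ B := (mem_sdiff.1 hb).2
    refine ⟨insert b B, insert_subset (mem_sdiff.1 hb).1 hBU, by rw [card_insert_of_notMem hbB,
      hBcard], fun c hc i hi => ?_⟩
    have hi' : i ∈ U \ B := by
      simp only [mem_sdiff, mem_insert, not_or] at hi ⊢; exact ⟨hi.1, hi.2.2⟩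
    rcases mem_insert.1 hc with rfl | hcB
    · exact hbmin i hi'
    · exact hBmin c hcB i hi'

theorem rpow_le_mul_prod_rpow {ι : Type*} [Fintype ι] {t γ : ι → ℝ} (ht : ∀ i, 0 ≤ t i)
    (hγ : ∀ i, 0 ≤ γ i) {a D : ℝ} (ha : 0 ≤ a) (hD : 0 ≤ D) (h : ∀ i, γ i ≠ 0 → a ≤ D * t i) :
    a ^ ∑ i, γ i ≤ D ^ (∑ i, γ i) * ∏ i, t i ^ γ i := by
  rw [Real.rpow_sum_of_nonneg ha fun i _ => hγ i, Real.rpow_sum_of_nonneg hD fun i _ => hγ i,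
    ← prod_mul_distrib]
  refine prod_le_prod (fun i _ => Real.rpow_nonneg ha _) fun i _ => ?_
  rcases eq_or_ne (γ i) 0 with h0 | h0
  · simp [h0]
  · rw [← Real.mul_rpow hD (ht i)]
    exact Real.rpow_le_rpow ha (h i h0) (hγ i)

noncomputable section Transfer

variable {ι : Type*} [Fintype ι] [DecidableEq ι]

def donors (lam : ι → ℝ) (j0 : ι) (B : Finset ι) : Finset ι :=
  (Bᶜ.erase j0).filter fun i => 0 < lam i

def transfer (lam : ι → ℝ) (j0 : ι) (B : Finset ι) (i : ι) : ℝ :=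
  if i ∈ donors lam j0 B then -lam j0 * lam i / ∑ l ∈ donors lam j0 B, lam l else 0

def shiftedExponent (lam : ι → ℝ) (j0 : ι) (B : Finset ι) (j : ι) : ℝ :=
  if j = j0 then 0 else lam j - transfer lam j0 B j

variable {lam : ι → ℝ} {j0 : ι} {B : Finset ι}

theorem mem_donors {i : ι} : i ∈ donors lam j0 B ↔ i ≠ j0 ∧ i ∉ B ∧ 0 < lam i := by
  simp [donors, and_assoc]

theorem neg_le_sum_donors (hj0B : j0 ∉ B) (hB : 0 ≤ ∑ j ∈ Bᶜ, lam j) :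
    -lam j0 ≤ ∑ i ∈ donors lam j0 B, lam i := by
  have hsplit := sum_filter_add_sum_filter_not (Bᶜ.erase j0) (fun i => 0 < lam i) lam
  have hrest : ∑ i ∈ (Bᶜ.erase j0).filter (fun i => ¬0 < lam i), lam i ≤ 0 :=
    sum_nonpos fun i hi => not_lt.1 (mem_filter.1 hi).2
  rw [← add_sum_erase _ _ (mem_compl.2 hj0B)] at hB
  rw [donors]
  linarith

theorem transfer_of_notMem {i : ι} (hi : i ∉ donors lam j0 B) : transfer lam j0 B i = 0 :=
  if_neg hi

theorem transfer_nonneg (hlam0 : lam j0 ≤ 0) (i : ι) : 0 ≤ transfer lam j0 B i := by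
  unfold transfer
  split_ifs with hi
  · have hsum : 0 ≤ ∑ l ∈ donors lam j0 B, lam l :=
      sum_nonneg fun l hl => (mem_donors.1 hl).2.2.le
    have := (mem_donors.1 hi).2.2
    exact div_nonneg (mul_nonneg (neg_nonneg.2 hlam0) this.le) hsum
  · exact le_rfl

theorem transfer_le (hs : -lam j0 ≤ ∑ i ∈ donors lam j0 B, lam i) {i : ι} (hi : 0 ≤ lam i) :
    transfer lam j0 B i ≤ lam i := by
  unfold transfer
  split_ifs with hiD
  · have hpos := (mem_donors.1 hiD).2.2
    rw [div_le_iff₀ (hpos.trans_le (single_le_sum (fun l hl => (mem_donors.1 hl).2.2.le) hiD))]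
    nlinarith
  · exact hi

theorem sum_transfer (h : ∑ i ∈ donors lam j0 B, lam i ≠ 0) :
    ∑ i, transfer lam j0 B i = -lam j0 := by
  simp only [transfer]
  rw [sum_ite_mem, univ_inter, ← sum_div, ← mul_sum, mul_div_assoc, div_self h, mul_one]

theorem shiftedExponent_self : shiftedExponent lam j0 B j0 = 0 := if_pos rfl

theorem shiftedExponent_of_ne {j : ι} (hj : j ≠ j0) :
    shiftedExponent lam j0 B j = lam j - transfer lam j0 B j := if_neg hj

theorem sub_shiftedExponent (lam : ι → ℝ) (j0 : ι) (B : Finset ι) (j : ι) :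
    lam j - shiftedExponent lam j0 B j
      = (Pi.single j0 (lam j0) : ι → ℝ) j + transfer lam j0 B j := by
  rcases eq_or_ne j j0 with rfl | hj
  · rw [shiftedExponent_self, transfer_of_notMem (by simp [mem_donors])]; simp
  · rw [shiftedExponent_of_ne hj, Pi.single_eq_of_ne hj]; ring

theorem shiftedExponent_of_nonpos {j : ι} (hj : lam j ≤ 0) (hj0 : j ≠ j0) :
    shiftedExponent lam j0 B j = lam j := by
  rw [shiftedExponent_of_ne hj0, transfer_of_notMem fun h => (mem_donors.1 h).2.2.not_ge hj,
    sub_zero]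

theorem shiftedExponent_le (hlam0 : lam j0 ≤ 0) (j : ι) (hj : j ≠ j0) :
    shiftedExponent lam j0 B j ≤ lam j := by
  rw [shiftedExponent_of_ne hj]; linarith [transfer_nonneg (B := B) hlam0 j]

theorem shiftedExponent_nonneg (hlam0 : lam j0 < 0) (hs : -lam j0 ≤ ∑ i ∈ donors lam j0 B, lam i)
    {j : ι} (hj : 0 ≤ lam j) : 0 ≤ shiftedExponent lam j0 B j := by
  rw [shiftedExponent_of_ne (by rintro rfl; linarith)]
  linarith [transfer_le hs hj]

theorem sum_shiftedExponent (hlam0 : lam j0 < 0)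
    (hs : -lam j0 ≤ ∑ i ∈ donors lam j0 B, lam i) :
    ∑ j, shiftedExponent lam j0 B j = ∑ j, lam j := by
  have h := sum_congr rfl fun j (_ : j ∈ univ) => sub_shiftedExponent lam j0 B j
  rw [sum_sub_distrib, sum_add_distrib, sum_pi_single', if_pos (mem_univ _),
    sum_transfer (by linarith)] at h
  linarith

/-- Here `hsmall` is (v2) for the spans of fewer than `m` generic vectors, and `U` stands for the
set of indices `j` with `v_j ∉ V`. -/
theorem sum_shiftedExponent_nonneg {m : ℕ} (hlam0 : lam j0 < 0)
    (hsmall : ∀ S : Finset ι, #S < m → 0 ≤ ∑ j ∈ Sᶜ, lam j) (hB : #B < m) (hj0B : j0 ∉ B)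
    {U : Finset ι} (hU : 0 ≤ ∑ j ∈ U, lam j) (hUc : U.Nonempty → #Uᶜ < m) :
    0 ≤ ∑ j ∈ U, shiftedExponent lam j0 B j := by
  have hs := neg_le_sum_donors hj0B (hsmall B hB)
  have hdiff := sum_congr rfl fun j (_ : j ∈ U) => sub_shiftedExponent lam j0 B j
  rw [sum_sub_distrib, sum_add_distrib, sum_pi_single'] at hdiff
  have hγ : ∑ j ∈ U, transfer lam j0 B j ≤ -lam j0 := by
    rw [← sum_transfer (B := B) (by linarith)]
    exact sum_le_sum_of_subset_of_nonneg (subset_univ U) fun i _ _ => transfer_nonneg hlam0.le i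
  split_ifs at hdiff with hj0U
  · linarith
  by_cases hzero : ∀ i ∈ U, transfer lam j0 B i = 0
  · rw [sum_eq_zero hzero] at hdiff; linarith
  obtain ⟨i, hiU, hi⟩ := not_forall₂.1 hzero
  have hiD : i ∈ donors lam j0 B := by_contra fun h => hi (transfer_of_notMem h)
  have hj0Uc : j0 ∈ Uᶜ := mem_compl.2 hj0U
  have hiUc : i ∉ Uᶜ.erase j0 := fun h => mem_compl.1 (mem_of_mem_erase h) hiU
  have hS := hsmall (insert i (Uᶜ.erase j0)) <| by
    rw [card_insert_of_notMem hiUc, card_erase_of_mem hj0Uc]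
    have := hUc ⟨i, hiU⟩
    have := card_pos.2 ⟨j0, hj0Uc⟩
    omega
  have hcompl := sum_add_sum_compl (insert i (Uᶜ.erase j0)) lam
  rw [sum_insert hiUc, sum_erase_eq_sub hj0Uc] at hcompl
  have hUUc := sum_add_sum_compl U lam
  linarith [(mem_donors.1 hiD).2.2]

theorem one_le_rpow_mul_prod_rpow_sub_shiftedExponent {t : ι → ℝ} (ht : ∀ i, 0 < t i) {D : ℝ}
    (hD : 0 ≤ D) (hlam0 : lam j0 < 0) (hs : -lam j0 ≤ ∑ i ∈ donors lam j0 B, lam i)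
    (hdom : ∀ i ∈ donors lam j0 B, t j0 ≤ D * t i) :
    1 ≤ D ^ (-lam j0) * ∏ j, t j ^ (lam j - shiftedExponent lam j0 B j) := by
  have hbound := rpow_le_mul_prod_rpow (fun i => (ht i).le) (transfer_nonneg (B := B) hlam0.le)
    (ht j0).le hD fun i hi => hdom i (by_contra fun h => hi (transfer_of_notMem h))
  rw [sum_transfer (by linarith)] at hbound
  have hprod : ∏ j, t j ^ (lam j - shiftedExponent lam j0 B j)
      = t j0 ^ lam j0 * ∏ j, t j ^ transfer lam j0 B j := by
    simp only [sub_shiftedExponent, Real.rpow_add (ht _), prod_mul_distrib]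
    rw [Fintype.prod_eq_single j0 fun j hj => by rw [Pi.single_eq_of_ne hj, Real.rpow_zero],
      Pi.single_eq_same]
  have hinv : t j0 ^ lam j0 * t j0 ^ (-lam j0) = 1 := by
    rw [← Real.rpow_add (ht j0), add_neg_cancel, Real.rpow_zero]
  rw [hprod]
  calc (1 : ℝ) = t j0 ^ lam j0 * t j0 ^ (-lam j0) := hinv.symm
    _ ≤ t j0 ^ lam j0 * (D ^ (-lam j0) * ∏ j, t j ^ transfer lam j0 B j) :=
      mul_le_mul_of_nonneg_left hbound (Real.rpow_nonneg (ht j0).le _)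
    _ = _ := by ring

end Transfer

theorem exists_mem_powersetCard_forall_le_mul {ι : Type*} [Fintype ι] [DecidableEq ι]
    {t : ι → ℝ} {C : ℝ} (hC : 0 ≤ C) {m : ℕ} (hm : 0 < m) {j0 : ι} (hmι : m ≤ Fintype.card ι)
    (h : ∀ S : Finset ι, #S = m → t j0 ≤ C * ∑ i ∈ S, t i) :
    ∃ B ∈ powersetCard (m - 1) (univ.erase j0), ∀ i ∈ univ.erase j0 \ B, t j0 ≤ C * m * t i := by
  obtain ⟨B, hBU, hBcard, hBmin⟩ := exists_subset_card_eq_forall_le t (r := m - 1)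
    (U := univ.erase j0) (by rw [card_erase_of_mem (mem_univ _), card_univ]; omega)
  refine ⟨B, mem_powersetCard.2 ⟨hBU, hBcard⟩, fun i hi => ?_⟩
  have hiB : i ∉ B := (mem_sdiff.1 hi).2
  calc t j0 ≤ C * ∑ l ∈ insert i B, t l :=
        h _ (by rw [card_insert_of_notMem hiB, hBcard]; omega)
    _ ≤ C * ∑ l ∈ insert i B, t i := by
        refine mul_le_mul_of_nonneg_left (sum_le_sum fun l hl => ?_) hC
        rcases mem_insert.1 hl with rfl | hlB
        · exact le_rfl
        · exact hBmin l hlB i hi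
    _ = C * m * t i := by
        rw [sum_const, card_insert_of_notMem hiB, hBcard, Nat.sub_add_cancel hm, nsmul_eq_mul]
        ring

theorem one_le_ofReal_mul_sum_prod_rpow {ι E : Type*} [Fintype ι] [DecidableEq ι]
    [NormedAddCommGroup E] {y : ι → E} (hy : ∀ j, y j ≠ 0) {lam : ι → ℝ} {j0 : ι}
    (hlam0 : lam j0 < 0) {m : ℕ} (hm : 0 < m) (hmι : m ≤ Fintype.card ι)
    (hs : ∀ B ∈ powersetCard (m - 1) (univ.erase j0), -lam j0 ≤ ∑ i ∈ donors lam j0 B, lam i)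
    {C : ℝ} (hC0 : 0 ≤ C) (hC : ∀ S : Finset ι, #S = m → ‖y j0‖ ≤ C * ∑ i ∈ S, ‖y i‖) :
    1 ≤ ENNReal.ofReal ((C * m) ^ (-lam j0)) * ∑ B ∈ powersetCard (m - 1) (univ.erase j0),
      ∏ j, (‖y j‖₊ : ℝ≥0∞) ^ (lam j - shiftedExponent lam j0 B j) := by
  have hy' : ∀ j, 0 < ‖y j‖ := fun j => norm_pos_iff.2 (hy j)
  obtain ⟨B, hB, hdom⟩ := exists_mem_powersetCard_forall_le_mul (t := fun j => ‖y j‖) hC0 hm hmι hC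
  have hreal := one_le_rpow_mul_prod_rpow_sub_shiftedExponent hy' (by positivity) hlam0 (hs B hB)
    fun i hi => hdom i <| by
      obtain ⟨hij0, hiB, -⟩ := mem_donors.1 hi
      exact mem_sdiff.2 ⟨mem_erase.2 ⟨hij0, mem_univ i⟩, hiB⟩
  calc (1 : ℝ≥0∞) = ENNReal.ofReal 1 := ofReal_one.symm
    _ ≤ ENNReal.ofReal ((C * m) ^ (-lam j0) *
          ∏ j, ‖y j‖ ^ (lam j - shiftedExponent lam j0 B j)) := ofReal_le_ofReal hreal
    _ = ENNReal.ofReal ((C * m) ^ (-lam j0)) *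
          ∏ j, (‖y j‖₊ : ℝ≥0∞) ^ (lam j - shiftedExponent lam j0 B j) := by
        rw [ofReal_mul (by positivity), ofReal_prod_of_nonneg fun j _ => by positivity]
        congr 1
        refine prod_congr rfl fun j _ => ?_
        rw [← ofReal_rpow_of_pos (hy' j), ofReal_norm]
        rfl
    _ ≤ _ := mul_le_mul_right
        (single_le_sum (f := fun B => ∏ j, (‖y j‖₊ : ℝ≥0∞) ^ (lam j - shiftedExponent lam j0 B j))
          (fun _ _ => zero_le) hB) _

section Genericity

variable {m N : ℕ} {v : Fin N → Fin m → ℝ}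

def CondV1 (v : Fin N → Fin m → ℝ) (w : Fin N → ℝ) : Prop :=
  ∀ V : Submodule ℝ (Fin m → ℝ), V ≠ ⊥ → V ≠ ⊤ →
    (m : ℝ) - (finrank ℝ V : ℝ) < ∑ j ∈ univ.filter (fun j => v j ∉ V), w j

def CondV2 (v : Fin N → Fin m → ℝ) (lam : Fin N → ℝ) : Prop :=
  ∀ V : Submodule ℝ (Fin m → ℝ), 0 ≤ ∑ j ∈ univ.filter (fun j => v j ∉ V), lam j

theorem le_card_of_condV1 {w : Fin N → ℝ} (hv0 : ∀ j, v j ≠ 0) (hN : 0 < N)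
    (hv1 : CondV1 v w) : m ≤ N := by
  by_contra! h
  have hmem : ∀ j, v j ∈ span ℝ (Set.range v) := fun j => subset_span (Set.mem_range_self j)
  have hVm : finrank ℝ (span ℝ (Set.range v)) < m :=
    (finrank_range_le_card v).trans_lt (by simpa using h)
  have hV0 : span ℝ (Set.range v) ≠ ⊥ := fun hV => hv0 ⟨0, hN⟩ <| by
    simpa [hV] using hmem ⟨0, hN⟩
  have hVt : span ℝ (Set.range v) ≠ ⊤ := fun hV => by
    rw [hV, finrank_top, finrank_fin_fun] at hVm
    exact hVm.false
  have h1 := hv1 _ hV0 hVt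
  rw [filter_false_of_mem fun j _ => not_not.2 (hmem j), sum_empty] at h1
  have : (finrank ℝ (span ℝ (Set.range v)) : ℝ) < m := by exact_mod_cast hVm
  linarith

theorem IsGeneric.linearIndepOn (hgen : IsGeneric v) (hNm : m ≤ N) {S : Finset (Fin N)}
    (hS : #S ≤ m) : LinearIndepOn ℝ v (S : Set (Fin N)) := by
  obtain ⟨T, hST, -, hT⟩ := exists_subsuperset_card_eq (subset_univ S) hS (by simpa using hNm)
  exact LinearIndepOn.mono (hgen T hT).1 (coe_subset.2 hST)

theorem IsGeneric.notMem_span (hgen : IsGeneric v) (hNm : m ≤ N) {S : Finset (Fin N)}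
    (hS : #S < m) {j : Fin N} (hj : j ∉ S) : v j ∉ span ℝ (v '' S) := by
  have := hgen.linearIndepOn hNm (S := insert j S) (by rw [card_insert_of_notMem hj]; omega)
  rw [coe_insert, linearIndepOn_insert (by simpa)] at this
  exact this.2

theorem IsGeneric.filter_notMem_span_eq_compl (hgen : IsGeneric v) (hNm : m ≤ N)
    {S : Finset (Fin N)} (hS : #S < m) : univ.filter (fun j => v j ∉ span ℝ (v '' S)) = Sᶜ := by
  ext j
  simp only [mem_filter, mem_univ, true_and, mem_compl]
  exact ⟨fun h hj => h (subset_span (Set.mem_image_of_mem v hj)), hgen.notMem_span hNm hS⟩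

theorem IsGeneric.card_filter_mem_le_finrank (hgen : IsGeneric v) (hNm : m ≤ N)
    {V : Submodule ℝ (Fin m → ℝ)} (hV : V ≠ ⊤) : #(univ.filter fun j => v j ∈ V) ≤ finrank ℝ V := by
  set T := univ.filter fun j => v j ∈ V
  have hTV : span ℝ (v '' T) ≤ V := span_le.2 <| by
    rintro _ ⟨j, hj, rfl⟩
    exact (mem_filter.1 hj).2
  have hT : #T < m := by
    by_contra! h
    obtain ⟨S, hST, hS⟩ := exists_subset_card_eq h
    exact hV (eq_top_iff.2 <| (hgen S hS).2.ge.trans <|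
      (span_mono (Set.image_mono (coe_subset.2 hST))).trans hTV)
  have := finrank_span_eq_card (hgen.linearIndepOn hNm hT.le)
  rw [← Set.image_eq_range] at this
  simpa [this] using Submodule.finrank_mono hTV

theorem sub_lt_sum_of_forall_lt_one {ι : Type*} [Fintype ι] [DecidableEq ι] {w : ι → ℝ}
    (hw : ∀ j, w j < 1) {m d : ℕ} (htot : ∑ j, w j = m) (hd : 0 < d) {U : Finset ι}
    (hU : #Uᶜ ≤ d) : (m : ℝ) - d < ∑ j ∈ U, w j := by
  have hUc : ∑ j ∈ Uᶜ, w j < d := by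
    rcases Uᶜ.eq_empty_or_nonempty with h | h
    · simpa [h] using hd
    · calc ∑ j ∈ Uᶜ, w j < ∑ j ∈ Uᶜ, (1 : ℝ) := sum_lt_sum_of_nonempty h fun j _ => hw j
        _ ≤ d := by simpa using hU
  linarith [sum_add_sum_compl U w]

theorem IsGeneric.lt_one_of_condV1 (hgen : IsGeneric v) (hNm : m ≤ N) {w : Fin N → ℝ}
    (hv1 : CondV1 v w) (htot : ∑ j, w j = m) (hm : 1 < m) {j : Fin N} (hj : v j ≠ 0) :
    w j < 1 := by
  have hfil := hgen.filter_notMem_span_eq_compl hNm (S := {j}) (by simpa)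
  rw [coe_singleton, Set.image_singleton] at hfil
  have h1 : finrank ℝ (span ℝ {v j}) = 1 := finrank_span_singleton hj
  have h := hv1 (span ℝ {v j}) (by simpa using hj) fun h => by
    rw [h, finrank_top, finrank_fin_fun] at h1; omega
  rw [hfil, h1] at h
  have := Fintype.sum_eq_add_sum_compl j w
  push_cast at h
  linarith

theorem IsGeneric.condV1_of_le (hgen : IsGeneric v) (hNm : m ≤ N) (hv0 : ∀ j, v j ≠ 0)
    {w w' : Fin N → ℝ} (hv1 : CondV1 v w) (htot : ∑ j, w j = m) (htot' : ∑ j, w' j = m)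
    {j0 : Fin N} (hj0 : w' j0 < 1) (hle : ∀ j ≠ j0, w' j ≤ w j) : CondV1 v w' := by
  intro V hV0 hVt
  have hd0 : 0 < finrank ℝ V := one_le_finrank_iff.2 hV0
  have hdm : finrank ℝ V < m := by simpa using finrank_lt hVt
  have hw' : ∀ j, w' j < 1 := fun j => by
    rcases eq_or_ne j j0 with rfl | hj
    · exact hj0
    · exact (hle j hj).trans_lt (hgen.lt_one_of_condV1 hNm hv1 htot (by omega) (hv0 j))
  refine sub_lt_sum_of_forall_lt_one hw' htot' hd0 ?_
  rw [compl_filter]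
  simpa using hgen.card_filter_mem_le_finrank hNm hVt

theorem IsGeneric.sum_compl_nonneg (hgen : IsGeneric v) (hNm : m ≤ N) {lam : Fin N → ℝ}
    (hv2 : CondV2 v lam) {S : Finset (Fin N)} (hS : #S < m) : 0 ≤ ∑ j ∈ Sᶜ, lam j := by
  rw [← hgen.filter_notMem_span_eq_compl hNm hS]
  exact hv2 _

theorem IsGeneric.condV2_shiftedExponent (hgen : IsGeneric v) (hNm : m ≤ N) {lam : Fin N → ℝ}
    (hv2 : CondV2 v lam) {j0 : Fin N} {B : Finset (Fin N)} (hlam0 : lam j0 < 0) (hB : #B < m)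
    (hj0B : j0 ∉ B) : CondV2 v (shiftedExponent lam j0 B) := fun V =>
  sum_shiftedExponent_nonneg hlam0 (fun S hS => hgen.sum_compl_nonneg hNm hv2 hS) hB hj0B (hv2 V)
    fun ⟨i, hi⟩ => by
      have hVt : V ≠ ⊤ := fun h => (mem_filter.1 hi).2 (h ▸ mem_top)
      rw [compl_filter]
      simpa using (hgen.card_filter_mem_le_finrank hNm hVt).trans_lt (by simpa using finrank_lt hVt)

end Genericity

section Analysis

variable {m k : ℕ}

theorem dotv_eq_linearCombination (w : Fin m → ℝ) (x : Fin m → EuclideanSpace ℝ (Fin k)) :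
    dotv w x = Fintype.linearCombination ℝ x w :=
  (Fintype.linearCombination_apply ℝ x w).symm

theorem exists_norm_dotv_le_mul_sum_of_mem_span {ι : Type*} {u : ι → Fin m → ℝ}
    {S : Finset ι} {w : Fin m → ℝ} (hw : w ∈ span ℝ (u '' S)) :
    ∃ c, 0 ≤ c ∧ ∀ x : Fin m → EuclideanSpace ℝ (Fin k),
      ‖dotv w x‖ ≤ c * ∑ i ∈ S, ‖dotv (u i) x‖ := by
  obtain ⟨t, htS, c, rfl⟩ := (mem_span_image_iff_exists_fun ℝ).1 hw
  refine ⟨∑ i, |c i|, sum_nonneg fun i _ => abs_nonneg _, fun x => ?_⟩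
  rw [dotv_eq_linearCombination, map_sum, sum_mul]
  refine (norm_sum_le _ _).trans (sum_le_sum fun i _ => ?_)
  rw [map_smul, ← dotv_eq_linearCombination, norm_smul, Real.norm_eq_abs]
  exact mul_le_mul_of_nonneg_left (single_le_sum (f := fun l => ‖dotv (u l) x‖)
    (fun _ _ => norm_nonneg _) (htS i.2)) (abs_nonneg _)

theorem IsGeneric.exists_norm_dotv_le_mul_sum {N : ℕ} {v : Fin N → Fin m → ℝ}
    (hgen : IsGeneric v) (w : Fin m → ℝ) :
    ∃ C, 0 ≤ C ∧ ∀ S : Finset (Fin N), #S = m → ∀ x : Fin m → EuclideanSpace ℝ (Fin k),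
      ‖dotv w x‖ ≤ C * ∑ i ∈ S, ‖dotv (v i) x‖ := by
  have h (S : {S : Finset (Fin N) // #S = m}) : ∃ c, 0 ≤ c ∧
      ∀ x : Fin m → EuclideanSpace ℝ (Fin k), ‖dotv w x‖ ≤ c * ∑ i ∈ S.1, ‖dotv (v i) x‖ :=
    exists_norm_dotv_le_mul_sum_of_mem_span ((hgen S.1 S.2).2 ▸ mem_top)
  choose c hc0 hc using h
  refine ⟨∑ S, c S, sum_nonneg fun S _ => hc0 S, fun S hS x => (hc ⟨S, hS⟩ x).trans ?_⟩
  exact mul_le_mul_of_nonneg_right (single_le_sum (fun S _ => hc0 S) (mem_univ _))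
    (sum_nonneg fun _ _ => norm_nonneg _)

theorem ae_dotv_ne_zero (hk : 0 < k) {w : Fin m → ℝ} (hw : w ≠ 0) :
    ∀ᵐ x : Fin m → EuclideanSpace ℝ (Fin k), dotv w x ≠ 0 := by
  let L : (Fin m → EuclideanSpace ℝ (Fin k)) →ₗ[ℝ] EuclideanSpace ℝ (Fin k) :=
    ∑ i, w i • LinearMap.proj i
  have hL : ∀ x, L x = dotv w x := fun x => by simp [L, dotv]
  obtain ⟨i, hi⟩ := Function.ne_iff.1 hw
  have : Nontrivial (EuclideanSpace ℝ (Fin k)) :=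
    nontrivial_of_finrank_pos (R := ℝ) (by simpa using hk)
  obtain ⟨u, hu⟩ := exists_ne (0 : EuclideanSpace ℝ (Fin k))
  have hker : LinearMap.ker L ≠ ⊤ := fun h => by
    have : L (Pi.single i u) = 0 := LinearMap.mem_ker.1 (h ▸ mem_top)
    rw [hL, dotv, sum_eq_single i (fun j _ hj => by simp [hj]) (by simp)] at this
    simp only [Pi.single_eq_same, smul_eq_zero, hu, or_false] at this
    exact hi this
  rw [ae_iff]
  convert Measure.addHaar_submodule volume _ hker using 2
  ext x
  simp [hL]

theorem BLform_le_mul_sum {N : ℕ} {α : Type*} (v : Fin N → Fin m → ℝ)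
    {f : Fin N → EuclideanSpace ℝ (Fin k) → ℝ≥0∞} (hf : ∀ j, Measurable (f j)) (s : Finset α)
    (w : α → Fin N → EuclideanSpace ℝ (Fin k) → ℝ≥0∞) (hw : ∀ a j, Measurable (w a j))
    {C : ℝ≥0∞} (h : ∀ᵐ x, 1 ≤ C * ∑ a ∈ s, ∏ j, w a j (dotv (v j) x)) :
    BLform v f ≤ C * ∑ a ∈ s, BLform v fun j y => w a j y * f j y := by
  have hdotv (j : Fin N) : Measurable fun x : Fin m → EuclideanSpace ℝ (Fin k) => dotv (v j) x := by
    unfold dotv; fun_prop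
  calc BLform v f ≤ ∫⁻ x, C * ∑ a ∈ s, ∏ j, (w a j (dotv (v j) x) * f j (dotv (v j) x)) := by
        refine lintegral_mono_ae (h.mono fun x hx => ?_)
        calc ∏ j, f j (dotv (v j) x)
            ≤ (C * ∑ a ∈ s, ∏ j, w a j (dotv (v j) x)) * ∏ j, f j (dotv (v j) x) :=
              le_mul_of_one_le_left' hx
          _ = _ := by simp only [mul_assoc, sum_mul, ← prod_mul_distrib]
    _ = C * ∑ a ∈ s, BLform v fun j y => w a j y * f j y := by
        rw [lintegral_const_mul _ (by fun_prop), lintegral_finsetSum _ fun a _ => by fun_prop]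
        rfl

end Analysis

theorem inductionStep_general (m k N : ℕ) (hm : 0 < m) (hk : 0 < k) (hN : 0 < N)
    (v : Fin N → Fin m → ℝ) (hv0 : ∀ j, v j ≠ 0)
    (hgen : IsGeneric v)
    (p lam : Fin N → ℝ)
    (hp : ∀ j, 0 < 1 / p j ∧ 1 / p j < 1)
    (hScaling : ∑ j, (1 / p j + lam j / (k : ℝ)) = (m : ℝ))
    (hv1 : ∀ V : Submodule ℝ (Fin m → ℝ), V ≠ ⊥ → V ≠ ⊤ →
      (m : ℝ) - (Module.finrank ℝ V : ℝ) <
        ∑ j ∈ Finset.univ.filter (fun j => v j ∉ V), (1 / p j + lam j / (k : ℝ)))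
    (hv2 : ∀ V : Submodule ℝ (Fin m → ℝ),
      0 ≤ ∑ j ∈ Finset.univ.filter (fun j => v j ∉ V), lam j)
    (hI : 1 ≤ ∑ j, 1 / p j)
    (hneg : ∃ j, lam j < 0)
    (j0 : Fin N) (hj0 : ∀ j, lam j0 ≤ lam j) :
    ∃ (n : ℕ) (β : Fin n → Fin N → ℝ) (C : ℝ≥0∞), 0 < n ∧ C ≠ ⊤ ∧
      (∀ a : Fin n,
        (∑ j, (1 / p j + β a j / (k : ℝ)) = (m : ℝ)) ∧
        (∀ V : Submodule ℝ (Fin m → ℝ), V ≠ ⊥ → V ≠ ⊤ →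
          (m : ℝ) - (Module.finrank ℝ V : ℝ) <
            ∑ j ∈ Finset.univ.filter (fun j => v j ∉ V), (1 / p j + β a j / (k : ℝ))) ∧
        (∀ V : Submodule ℝ (Fin m → ℝ),
          0 ≤ ∑ j ∈ Finset.univ.filter (fun j => v j ∉ V), β a j) ∧
        (1 ≤ ∑ j, 1 / p j) ∧
        β a j0 = 0 ∧
        (∀ j, lam j < 0 → j ≠ j0 → β a j = lam j) ∧
        (∀ j, 0 ≤ lam j → 0 ≤ β a j ∧ β a j ≤ lam j)) ∧
      (∀ f : Fin N → EuclideanSpace ℝ (Fin k) → ℝ≥0∞, (∀ j, Measurable (f j)) →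
        BLform v f ≤ C * ∑ a : Fin n,
          BLform v (fun j y => (‖y‖₊ : ℝ≥0∞) ^ (lam j - β a j) * f j y)) := by
  have hlam0 : lam j0 < 0 := by
    obtain ⟨j, hj⟩ := hneg
    exact (hj0 j).trans_lt hj
  have hNm : m ≤ N := le_card_of_condV1 hv0 hN hv1
  obtain ⟨C, hC0, hC⟩ := hgen.exists_norm_dotv_le_mul_sum (k := k) (v j0)
  set 𝔅 := powersetCard (m - 1) (univ.erase j0)
  have h𝔅 (B : Finset (Fin N)) (hB : B ∈ 𝔅) : #B < m ∧ j0 ∉ B := by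
    obtain ⟨hBsub, hBcard⟩ := mem_powersetCard.1 hB
    exact ⟨by omega, fun h => by simpa using hBsub h⟩
  have hs (B : Finset (Fin N)) (hB : B ∈ 𝔅) : -lam j0 ≤ ∑ i ∈ donors lam j0 B, lam i :=
    neg_le_sum_donors (h𝔅 B hB).2 (hgen.sum_compl_nonneg hNm hv2 (h𝔅 B hB).1)
  refine ⟨#𝔅, fun a => shiftedExponent lam j0 (𝔅.equivFin.symm a),
    ENNReal.ofReal ((C * m) ^ (-lam j0)), card_pos.2 (powersetCard_nonempty.2 (by simp; omega)),
    ofReal_ne_top, fun a => ?_, fun f hf => ?_⟩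
  · obtain ⟨hBm, hj0B⟩ := h𝔅 _ (𝔅.equivFin.symm a).2
    have hsa := hs _ (𝔅.equivFin.symm a).2
    have hscal : ∑ j, (1 / p j + shiftedExponent lam j0 (𝔅.equivFin.symm a) j / k) = m := by
      rw [sum_add_distrib, ← sum_div, sum_shiftedExponent hlam0 hsa, sum_div, ← sum_add_distrib,
        hScaling]
    refine ⟨hscal, hgen.condV1_of_le hNm hv0 hv1 hScaling hscal (j0 := j0)
      (by simpa [shiftedExponent_self] using (hp j0).2)
      (fun j hj => by gcongr; exact shiftedExponent_le hlam0.le j hj),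
      hgen.condV2_shiftedExponent hNm hv2 hlam0 hBm hj0B, hI, shiftedExponent_self,
      fun j hj hj' => shiftedExponent_of_nonpos hj.le hj',
      fun j hj => ⟨shiftedExponent_nonneg hlam0 hsa hj,
        shiftedExponent_le hlam0.le j (by rintro rfl; linarith)⟩⟩
  · have hreindex (F : Finset (Fin N) → ℝ≥0∞) : ∑ a, F (𝔅.equivFin.symm a) = ∑ B ∈ 𝔅, F B :=
      (𝔅.equivFin.symm.sum_comp (F ∘ Subtype.val)).trans (sum_coe_sort 𝔅 F)
    rw [hreindex fun B =>
      BLform v fun j y => (‖y‖₊ : ℝ≥0∞) ^ (lam j - shiftedExponent lam j0 B j) * f j y]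
    refine BLform_le_mul_sum v hf 𝔅 _ (fun B j => by fun_prop) ?_
    filter_upwards [ae_all_iff.2 fun j => ae_dotv_ne_zero hk (hv0 j)] with x hx
    exact one_le_ofReal_mul_sum_prod_rpow hx hlam0 hm (by simpa using hNm) hs hC0
      fun S hS => hC S hS x

/-- The induction-step lemma: if some `λ_j < 0`, one can find a finite family of
exponent vectors `β⁽ᵅ⁾` satisfying the same conditions, vanishing at the minimal index,
agreeing with `λ` at the other negative entries, lying in `[0, λ_j]` at nonnegative
entries, and controlling the form. -/
theorem inductionStep (m k N : ℕ) (hm : 0 < m) (hk : 0 < k) (hN : 0 < N)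
    (v : Fin N → Fin m → ℝ) (hv0 : ∀ j, v j ≠ 0) (hvinj : Function.Injective v)
    (hgen : IsGeneric v)
    (p lam : Fin N → ℝ)
    (hp : ∀ j, 0 < 1 / p j ∧ 1 / p j < 1)
    (hScaling : ∑ j, (1 / p j + lam j / (k : ℝ)) = (m : ℝ))
    (hv1 : ∀ V : Submodule ℝ (Fin m → ℝ), V ≠ ⊥ → V ≠ ⊤ →
      (m : ℝ) - (Module.finrank ℝ V : ℝ) <
        ∑ j ∈ Finset.univ.filter (fun j => v j ∉ V), (1 / p j + lam j / (k : ℝ)))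
    (hv2 : ∀ V : Submodule ℝ (Fin m → ℝ),
      0 ≤ ∑ j ∈ Finset.univ.filter (fun j => v j ∉ V), lam j)
    (hI : 1 ≤ ∑ j, 1 / p j)
    (hneg : ∃ j, lam j < 0)
    (j0 : Fin N) (hj0 : ∀ j, lam j0 ≤ lam j) :
    ∃ (n : ℕ) (β : Fin n → Fin N → ℝ) (C : ℝ≥0∞), 0 < n ∧ C ≠ ⊤ ∧
      (∀ a : Fin n,
        (∑ j, (1 / p j + β a j / (k : ℝ)) = (m : ℝ)) ∧
        (∀ V : Submodule ℝ (Fin m → ℝ), V ≠ ⊥ → V ≠ ⊤ →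
          (m : ℝ) - (Module.finrank ℝ V : ℝ) <
            ∑ j ∈ Finset.univ.filter (fun j => v j ∉ V), (1 / p j + β a j / (k : ℝ))) ∧
        (∀ V : Submodule ℝ (Fin m → ℝ),
          0 ≤ ∑ j ∈ Finset.univ.filter (fun j => v j ∉ V), β a j) ∧
        (1 ≤ ∑ j, 1 / p j) ∧
        β a j0 = 0 ∧
        (∀ j, lam j < 0 → j ≠ j0 → β a j = lam j) ∧
        (∀ j, 0 ≤ lam j → 0 ≤ β a j ∧ β a j ≤ lam j)) ∧
      (∀ f : Fin N → EuclideanSpace ℝ (Fin k) → ℝ≥0∞, (∀ j, Measurable (f j)) →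
        BLform v f ≤ C * ∑ a : Fin n,
          BLform v (fun j y => (‖y‖₊ : ℝ≥0∞) ^ (lam j - β a j) * f j y)) :=
  inductionStep_general m k N hm hk hN v hv0 hgen p lam hp hScaling hv1 hv2 hI hneg j0 hj0
end

section
/- Let m, k, N be positive integers and let E = {v_1,…,v_N} ⊂ R^m be a set of nonzero vectors no two of which are collinear. Suppose 1/p_j ∈ [0,1], λ_j ∈ R, and there is a finite constant C such that Λ(f_1,…,f_N) ≤ C Π_{j=1}^N ‖f_j‖_{L^{p_j}_{λ_j}(R^k)} for all nonnegative measurable f_1,…,f_N on R^k. Then Σ_{j=1}^N (1/p_j + λ_j/k) = m. -/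
open MeasureTheory ENNReal
open scoped Classical

/-!
Dilating every test function by `t > 0` multiplies the Brascamp–Lieb form by `t ^ (-m k)` and
the product of weighted norms by `t ^ (-∑ (λ_j + k / p_j))`. For the indicators of small balls
around the points `v_j · x₀`, where `x₀` avoids the finitely many proper subspaces
`{x | v_j · x = 0}`, the form is positive and the norms are finite, so the estimate survives
`t → 0` and `t → ∞` only if the two exponents agree.
-/

open Metric

lemma eq_zero_or_one_le_of_one_div_mem_Icc {p : ℝ} (h : 1 / p ∈ Set.Icc 0 1) :
    p = 0 ∨ 1 ≤ p := by
  rcases (one_div_nonneg.mp h.1).eq_or_lt with hp | hp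
  · exact .inl hp.symm
  · exact .inr ((div_le_one hp).mp h.2)

lemma eq_zero_of_forall_le_mul_ofReal_rpow {L B : ℝ≥0∞} {a : ℝ} (hL : L ≠ 0) (hB : B ≠ ⊤)
    (h : ∀ t : ℝ, 0 < t → L ≤ B * ENNReal.ofReal (t ^ a)) : a = 0 := by
  by_contra ha
  obtain ⟨ε, hε, hεB⟩ := ENNReal.exists_nnreal_pos_mul_lt hB hL
  have hε' : (0 : ℝ) < ε := hε
  have := h ((ε : ℝ) ^ a⁻¹) (Real.rpow_pos_of_pos hε' _)
  rw [← Real.rpow_mul hε'.le, inv_mul_cancel₀ ha, Real.rpow_one, ENNReal.ofReal_coe_nnreal,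
    mul_comm] at this
  exact (this.trans_lt hεB).false

lemma setLIntegral_lt_top_of_isCompact_of_continuousOn {X : Type*} [TopologicalSpace X]
    [MeasurableSpace X] {μ : Measure X} {K : Set X} (hK : IsCompact K) (hμK : μ K ≠ ⊤)
    {g : X → ℝ≥0∞} (hg : ContinuousOn g K) (hg_top : ∀ x ∈ K, g x ≠ ⊤) :
    ∫⁻ x in K, g x ∂μ < ⊤ := by
  rcases K.eq_empty_or_nonempty with rfl | hne
  · simp
  obtain ⟨x₀, hx₀, hmax⟩ := hK.exists_isMaxOn hne hg
  refine setLIntegral_lt_top_of_le_nnreal hμK ⟨(g x₀).toNNReal, fun x hx => ?_⟩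
  rw [ENNReal.coe_toNNReal (hg_top x₀ hx₀)]
  exact hmax hx

lemma lintegral_comp_smul_of_pos {E : Type*} [NormedAddCommGroup E] [NormedSpace ℝ E]
    [MeasurableSpace E] [BorelSpace E] [FiniteDimensional ℝ E] (μ : Measure E)
    [μ.IsAddHaarMeasure] (g : E → ℝ≥0∞) {t : ℝ} (ht : 0 < t) :
    ∫⁻ x, g (t • x) ∂μ =
      ENNReal.ofReal (t ^ (-(Module.finrank ℝ E : ℝ))) * ∫⁻ x, g x ∂μ := by
  have := lintegral_map_equiv g (MeasurableEquiv.smul₀ (α := E) t ht.ne') (μ := μ)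
  rw [MeasurableEquiv.coe_smul₀] at this
  rw [← this, Measure.map_addHaar_smul μ ht.ne', lintegral_smul_measure,
    smul_eq_mul, Real.rpow_neg ht.le, Real.rpow_natCast, abs_inv, abs_of_pos (pow_pos ht _)]

section BrascampLieb

variable {m k N : ℕ}

noncomputable def dotvLinearMap (v : Fin m → ℝ) :
    (Fin m → EuclideanSpace ℝ (Fin k)) →ₗ[ℝ] EuclideanSpace ℝ (Fin k) where
  toFun := dotv v
  map_add' x y := by simp only [dotv, Pi.add_apply, smul_add, Finset.sum_add_distrib]
  map_smul' t x := by
    simp only [dotv, Pi.smul_apply, Finset.smul_sum, RingHom.id_apply, smul_comm t]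

@[simp]
lemma dotvLinearMap_apply (v : Fin m → ℝ) (x : Fin m → EuclideanSpace ℝ (Fin k)) :
    dotvLinearMap v x = dotv v x := rfl

lemma continuous_dotv (v : Fin m → ℝ) :
    Continuous (dotv v : (Fin m → EuclideanSpace ℝ (Fin k)) → _) :=
  (dotvLinearMap v).continuous_of_finiteDimensional

lemma dotv_single (v : Fin m → ℝ) (i : Fin m) (y : EuclideanSpace ℝ (Fin k)) :
    dotv v (Pi.single i y) = v i • y := by
  simp [dotv, Pi.single_apply]

lemma exists_forall_dotv_ne_zero (hk : 0 < k) {v : Fin N → Fin m → ℝ} (hv : ∀ j, v j ≠ 0) :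
    ∃ x : Fin m → EuclideanSpace ℝ (Fin k), ∀ j, dotv (v j) x ≠ 0 := by
  have hker : ∀ j, LinearMap.ker (dotvLinearMap (k := k) (v j)) ≠ ⊤ := by
    intro j hj
    obtain ⟨i, hi⟩ := Function.ne_iff.mp (hv j)
    have := LinearMap.mem_ker.mp
      (hj ▸ Submodule.mem_top : Pi.single i (EuclideanSpace.single ⟨0, hk⟩ (1 : ℝ)) ∈ _)
    simp [dotv_single] at this
    exact hi this
  obtain ⟨x, -, hx⟩ := Set.exists_of_ssubset <|
    Submodule.iUnion_ssubset_of_forall_ne_top_of_card_lt Finset.univ _ hker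
      (by simp [ENat.card_eq_top_of_infinite])
  exact ⟨x, fun j hj => hx (Set.mem_biUnion (Finset.mem_univ j) hj)⟩

lemma BLform_comp_smul (v : Fin N → Fin m → ℝ)
    (f : Fin N → EuclideanSpace ℝ (Fin k) → ℝ≥0∞) {t : ℝ} (ht : 0 < t) :
    BLform v (fun j y => f j (t • y)) =
      ENNReal.ofReal (t ^ (-(m * k : ℝ))) * BLform v f := by
  have := lintegral_comp_smul_of_pos volume (fun x => ∏ j, f j (dotv (v j) x)) ht
  simp only [← dotvLinearMap_apply, map_smul] at this
  simpa [BLform, Module.finrank_pi_fintype, mul_comm] using this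

lemma wnorm_exponent_zero (α : ℝ) (f : EuclideanSpace ℝ (Fin k) → ℝ≥0∞) : wnorm 0 α f = 1 := by
  simp [wnorm]

lemma wnorm_comp_smul {p : ℝ} (hp : 0 < p) (α : ℝ) (f : EuclideanSpace ℝ (Fin k) → ℝ≥0∞)
    {t : ℝ} (ht : 0 < t) :
    wnorm p α (fun y => f (t • y)) = ENNReal.ofReal (t ^ (-(α + k / p))) * wnorm p α f := by
  have hweight : ∀ y : EuclideanSpace ℝ (Fin k),
      (‖y‖₊ : ℝ≥0∞) ^ α = ENNReal.ofReal (t ^ (-α)) * (‖t • y‖₊ : ℝ≥0∞) ^ α := by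
    intro y
    rw [← enorm_eq_nnnorm, ← enorm_eq_nnnorm, enorm_smul, Real.enorm_of_nonneg ht.le,
      ENNReal.mul_rpow_of_ne_top ENNReal.ofReal_ne_top enorm_ne_top, ← mul_assoc,
      ENNReal.ofReal_rpow_of_pos ht, ← ENNReal.ofReal_mul (by positivity), ← Real.rpow_add ht,
      neg_add_cancel, Real.rpow_zero, ENNReal.ofReal_one, one_mul]
  have hint : ∫⁻ y, ((‖y‖₊ : ℝ≥0∞) ^ α * f (t • y)) ^ p =
      ENNReal.ofReal (t ^ (-(α * p + k))) * ∫⁻ y, ((‖y‖₊ : ℝ≥0∞) ^ α * f y) ^ p := by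
    rw [lintegral_congr fun y => by
      rw [hweight y, mul_assoc, ENNReal.mul_rpow_of_nonneg _ _ hp.le],
      lintegral_const_mul' _ _ (ENNReal.rpow_ne_top_of_nonneg hp.le ENNReal.ofReal_ne_top),
      lintegral_comp_smul_of_pos volume (fun z => ((‖z‖₊ : ℝ≥0∞) ^ α * f z) ^ p) ht,
      finrank_euclideanSpace_fin, ← mul_assoc, ENNReal.ofReal_rpow_of_pos (by positivity),
      ← Real.rpow_mul ht.le, ← ENNReal.ofReal_mul (by positivity), ← Real.rpow_add ht]
    ring_nf
  rw [wnorm, wnorm, hint, ENNReal.mul_rpow_of_nonneg _ _ (by positivity),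
    ENNReal.ofReal_rpow_of_pos (by positivity), ← Real.rpow_mul ht.le]
  congr 3
  field_simp

lemma wnorm_indicator_ball_ne_top {p : ℝ} (hp : 0 ≤ p) (α : ℝ) {c : EuclideanSpace ℝ (Fin k)}
    {r : ℝ} (hr : r < ‖c‖) : wnorm p α ((ball c r).indicator 1) ≠ ⊤ := by
  rcases hp.eq_or_lt with rfl | hp
  · simp [wnorm_exponent_zero]
  refine ENNReal.rpow_ne_top_of_nonneg (by positivity) (ne_of_lt ?_)
  have hpoint : ∀ y, ((‖y‖₊ : ℝ≥0∞) ^ α * (ball c r).indicator 1 y) ^ p =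
      (ball c r).indicator (fun y => ((‖y‖₊ : ℝ≥0∞) ^ α) ^ p) y := by
    intro y
    by_cases hy : y ∈ ball c r <;> simp [hy, ENNReal.zero_rpow_of_pos hp]
  rw [lintegral_congr hpoint, lintegral_indicator measurableSet_ball]
  refine (lintegral_mono_set ball_subset_closedBall).trans_lt <|
    setLIntegral_lt_top_of_isCompact_of_continuousOn (isCompact_closedBall c r)
      measure_closedBall_lt_top.ne (by fun_prop) fun y hy => ?_
  have hy₀ : y ≠ 0 := by
    rintro rfl
    simp only [mem_closedBall, dist_zero_left] at hy
    linarith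
  exact ENNReal.rpow_ne_top_of_nonneg hp.le <|
    ENNReal.rpow_ne_top_of_ne_zero (by simpa using hy₀) ENNReal.coe_ne_top

lemma BLform_indicator_ball_pos (v : Fin N → Fin m → ℝ) (x₀ : Fin m → EuclideanSpace ℝ (Fin k))
    {r : Fin N → ℝ} (hr : ∀ j, 0 < r j) :
    0 < BLform v (fun j => (ball (dotv (v j) x₀) (r j)).indicator 1) := by
  set U := ⋂ j, dotv (v j) ⁻¹' ball (dotv (v j) x₀) (r j)
  have hU : IsOpen U := isOpen_iInter_of_finite fun j => isOpen_ball.preimage (continuous_dotv _)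
  calc 0 < volume U := hU.measure_pos volume ⟨x₀, Set.mem_iInter.mpr fun j => mem_ball_self (hr j)⟩
    _ = ∫⁻ x in U, ∏ j, (ball (dotv (v j) x₀) (r j)).indicator 1 (dotv (v j) x) := by
      rw [setLIntegral_congr_fun hU.measurableSet fun x hx => ?_, setLIntegral_one]
      exact Finset.prod_eq_one fun j _ => Set.indicator_of_mem (Set.mem_iInter.mp hx j) 1
    _ ≤ _ := setLIntegral_le_lintegral _ _

lemma BLform_const_mul (v : Fin N → Fin m → ℝ) (c : Fin N → ℝ≥0∞)
    {f : Fin N → EuclideanSpace ℝ (Fin k) → ℝ≥0∞} (hf : ∀ j, Measurable (f j)) :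
    BLform v (fun j y => c j * f j y) = (∏ j, c j) * BLform v f := by
  simp only [BLform, Finset.prod_mul_distrib]
  exact lintegral_const_mul _ <|
    Finset.measurable_prod _ fun j _ => (hf j).comp (continuous_dotv _).measurable

section BoundedBLform

variable {v : Fin N → Fin m → ℝ} {p lam : Fin N → ℝ} {C : ℝ≥0∞}
  {f : Fin N → EuclideanSpace ℝ (Fin k) → ℝ≥0∞}

/-- The paper's `p_j = ∞`, i.e. `1 / p_j = 0`, is `p_j = 0` here, where `wnorm` is identically `1`;
so the estimate would have to hold for `⊤ * f j`, which it cannot. -/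
lemma exponent_ne_zero_of_BLform_le (hC : C ≠ ⊤)
    (hbound : ∀ g : Fin N → EuclideanSpace ℝ (Fin k) → ℝ≥0∞, (∀ j, Measurable (g j)) →
      BLform v g ≤ C * ∏ j, wnorm (p j) (lam j) (g j))
    (hf : ∀ j, Measurable (f j)) (hΛ : 0 < BLform v f)
    (hfin : ∀ j, wnorm (p j) (lam j) (f j) ≠ ⊤) (j₀ : Fin N) : p j₀ ≠ 0 := by
  intro hj₀
  set c : Fin N → ℝ≥0∞ := fun j => if j = j₀ then ⊤ else 1
  have hfin' : ∀ j, wnorm (p j) (lam j) (fun y => c j * f j y) ≠ ⊤ := by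
    intro j
    by_cases hj : j = j₀
    · subst hj
      simp [hj₀, wnorm_exponent_zero]
    · simpa [c, hj] using hfin j
  have h := hbound _ fun j => (hf j).const_mul (c j)
  rw [BLform_const_mul v c hf, Finset.prod_ite_eq' Finset.univ j₀, if_pos (Finset.mem_univ _),
    ENNReal.top_mul hΛ.ne', top_le_iff] at h
  exact ENNReal.mul_ne_top hC (ENNReal.prod_ne_top fun j _ => hfin' j) h

lemma sum_scaling_exponent_eq_of_BLform_le (hp : ∀ j, 0 < p j) (hC : C ≠ ⊤)
    (hbound : ∀ g : Fin N → EuclideanSpace ℝ (Fin k) → ℝ≥0∞, (∀ j, Measurable (g j)) →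
      BLform v g ≤ C * ∏ j, wnorm (p j) (lam j) (g j))
    (hf : ∀ j, Measurable (f j)) (hΛ : 0 < BLform v f)
    (hfin : ∀ j, wnorm (p j) (lam j) (f j) ≠ ⊤) :
    ∑ j, (lam j + k / p j) = m * k := by
  set P := ∏ j, wnorm (p j) (lam j) (f j)
  have hCP : C * P ≠ ⊤ := ENNReal.mul_ne_top hC (ENNReal.prod_ne_top fun j _ => hfin j)
  refine (sub_eq_zero.mp <| eq_zero_of_forall_le_mul_ofReal_rpow hΛ.ne' hCP fun t ht => ?_).symm
  have h := hbound (fun j y => f j (t • y)) fun j => (hf j).comp (measurable_const_smul t)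
  simp only [BLform_comp_smul v f ht, wnorm_comp_smul (hp _) _ _ ht, Finset.prod_mul_distrib,
    ← ENNReal.ofReal_prod_of_nonneg fun j _ => (Real.rpow_pos_of_pos ht _).le,
    ← Real.rpow_sum_of_pos ht, Finset.sum_neg_distrib] at h
  calc BLform v f
      = ENNReal.ofReal (t ^ (m * k : ℝ)) * (ENNReal.ofReal (t ^ (-(m * k : ℝ))) * BLform v f) := by
        rw [← mul_assoc, ← ENNReal.ofReal_mul (by positivity), ← Real.rpow_add ht,
          add_neg_cancel, Real.rpow_zero, ENNReal.ofReal_one, one_mul]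
    _ ≤ ENNReal.ofReal (t ^ (m * k : ℝ)) *
          (C * (ENNReal.ofReal (t ^ (-∑ j, (lam j + k / p j))) * P)) := by gcongr
    _ = C * P * ENNReal.ofReal (t ^ (m * k - ∑ j, (lam j + k / p j))) := by
        rw [sub_eq_add_neg, Real.rpow_add ht, ENNReal.ofReal_mul (by positivity)]
        ring

end BoundedBLform

end BrascampLieb

theorem necessary_condition_general (m k N : ℕ) (hk : 0 < k)
    (v : Fin N → Fin m → ℝ) (hv0 : ∀ j, v j ≠ 0)
    (p lam : Fin N → ℝ)
    (hp : ∀ j, 0 ≤ 1 / p j ∧ 1 / p j ≤ 1)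
    (C : ℝ≥0∞) (hC : C ≠ ⊤)
    (hbound : ∀ f : Fin N → EuclideanSpace ℝ (Fin k) → ℝ≥0∞, (∀ j, Measurable (f j)) →
      BLform v f ≤ C * ∏ j, wnorm (p j) (lam j) (f j)) :
    ∑ j, (1 / p j + lam j / (k : ℝ)) = (m : ℝ) := by
  obtain ⟨x₀, hx₀⟩ := exists_forall_dotv_ne_zero hk hv0
  have hc : ∀ j, 0 < ‖dotv (v j) x₀‖ := fun j => norm_pos_iff.mpr (hx₀ j)
  set f : Fin N → EuclideanSpace ℝ (Fin k) → ℝ≥0∞ :=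
    fun j => (ball (dotv (v j) x₀) (‖dotv (v j) x₀‖ / 2)).indicator 1
  have hf : ∀ j, Measurable (f j) := fun j => measurable_one.indicator measurableSet_ball
  have hΛ : 0 < BLform v f := BLform_indicator_ball_pos v x₀ fun j => half_pos (hc j)
  have hfin : ∀ j, wnorm (p j) (lam j) (f j) ≠ ⊤ := fun j =>
    wnorm_indicator_ball_ne_top (one_div_nonneg.mp (hp j).1) _ (half_lt_self (hc j))
  have hp_pos : ∀ j, 0 < p j := fun j =>
    ((eq_zero_or_one_le_of_one_div_mem_Icc (hp j)).resolve_left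
      (exponent_ne_zero_of_BLform_le hC hbound hf hΛ hfin j)).trans_lt' one_pos
  have hS := sum_scaling_exponent_eq_of_BLform_le hp_pos hC hbound hf hΛ hfin
  have hk' : (k : ℝ) ≠ 0 := Nat.cast_ne_zero.mpr hk.ne'
  calc ∑ j, (1 / p j + lam j / (k : ℝ)) = (∑ j, (lam j + k / p j)) / k := by
        rw [Finset.sum_div]
        refine Finset.sum_congr rfl fun j _ => ?_
        field_simp [(hp_pos j).ne']
        ring
    _ = m := by rw [hS]; field_simp

/-- A necessary condition for the weighted Brascamp–Lieb estimate. -/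
theorem necessary_condition (m k N : ℕ) (hm : 0 < m) (hk : 0 < k) (hN : 0 < N)
    (v : Fin N → Fin m → ℝ) (hv0 : ∀ j, v j ≠ 0) (hvinj : Function.Injective v)
    (hnc : ∀ i j, i ≠ j → ∀ c : ℝ, v i ≠ c • v j)
    (p lam : Fin N → ℝ)
    (hp : ∀ j, 0 ≤ 1 / p j ∧ 1 / p j ≤ 1)
    (C : ℝ≥0∞) (hC : C ≠ ⊤)
    (hbound : ∀ f : Fin N → EuclideanSpace ℝ (Fin k) → ℝ≥0∞, (∀ j, Measurable (f j)) →
      BLform v f ≤ C * ∏ j, wnorm (p j) (lam j) (f j)) :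
    ∑ j, (1 / p j + lam j / (k : ℝ)) = (m : ℝ) :=
  necessary_condition_general m k N hk v hv0 p lam hp C hC hbound
end
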